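/- arXiv:1905.07295 — 2 statements merged into one kernel-verified Lean document; each statement's English description precedes it below -/
import Mathlib

section
/- Let P ~ N(X, σ²) and h(x) = (x − X)(ℙ(P < x) − ℙ(P > x)). If |x − X| > √2 σ, then |h′(x)| ≥ 1. -/
/-!
With `f` the Gaussian density and `G(x) = ℙ(P > x)`, one has `h'(x) = 1 - 2 G(x) + 2 (x - X) f(x)`.
Since `f' = -((t - X) / σ²) f`, integrating by parts gives `∫_{t > x} (t - X) f(t) dt = σ² f(x)`,
hence Mills' bound `(x - X) G(x) ≤ σ² f(x)`. When `(x - X)² ≥ σ²` and `x > X` this says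
`G(x) ≤ (x - X) f(x)`, i.e. `h'(x) ≥ 1`; the case `x < X` is the mirror image, giving `h'(x) ≤ -1`.
-/

open ProbabilityTheory MeasureTheory Set Filter Topology
open scoped NNReal

theorem hasDerivAt_integral_Iic {f : ℝ → ℝ} (hf : Integrable f) {x : ℝ} (hfx : ContinuousAt f x) :
    HasDerivAt (fun y => ∫ t in Iic y, f t) (f x) x := by
  have hsplit : (fun y => ∫ t in Iic y, f t) = fun y => (∫ t in Iic x, f t) + ∫ t in x..y, f t := by
    funext y
    rw [← intervalIntegral.integral_Iic_sub_Iic hf.integrableOn hf.integrableOn]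
    ring
  rw [hsplit]
  simpa using (intervalIntegral.integral_hasDerivAt_right hf.intervalIntegrable
    hf.aestronglyMeasurable.stronglyMeasurableAtFilter hfx).const_add (∫ t in Iic x, f t)

namespace ProbabilityTheory

variable {v : ℝ≥0}

theorem hasDerivAt_gaussianPDFReal (m : ℝ) (v : ℝ≥0) (x : ℝ) :
    HasDerivAt (gaussianPDFReal m v) (-((x - m) / v) * gaussianPDFReal m v x) x := by
  have hexp := ((((hasDerivAt_id x).sub_const m).pow 2).neg.div_const (2 * (v : ℝ))).exp
  refine (hexp.const_mul (√(2 * Real.pi * v))⁻¹).congr_deriv ?_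
  simp only [gaussianPDFReal, Pi.neg_apply, Pi.pow_apply, id_eq]
  ring

theorem integrable_sub_mul_gaussianPDFReal (m : ℝ) (hv : v ≠ 0) :
    Integrable fun t => (t - m) * gaussianPDFReal m v t := by
  have hv' : (0 : ℝ) < v := by positivity
  have hmoment := ((integrable_mul_exp_neg_mul_sq (b := (2 * (v : ℝ))⁻¹) (by positivity)).const_mul
    (√(2 * Real.pi * v))⁻¹).comp_sub_right m
  refine hmoment.congr (ae_of_all _ fun t => ?_)
  simp only [gaussianPDFReal]
  ring_nf

theorem integral_Ioi_sub_mul_gaussianPDFReal (m : ℝ) (hv : v ≠ 0) (x : ℝ) :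
    ∫ t in Ioi x, (t - m) * gaussianPDFReal m v t = v * gaussianPDFReal m v x := by
  have hv' : (v : ℝ) ≠ 0 := NNReal.coe_ne_zero.mpr hv
  have hderiv (t : ℝ) : HasDerivAt (fun t => -(v * gaussianPDFReal m v t))
      ((t - m) * gaussianPDFReal m v t) t := by
    refine ((hasDerivAt_gaussianPDFReal m v t).const_mul (v : ℝ)).neg.congr_deriv ?_
    field_simp
  have hint := integrable_sub_mul_gaussianPDFReal m hv
  have hlim : Tendsto (fun t => -(v * gaussianPDFReal m v t)) atTop (𝓝 0) :=
    tendsto_zero_of_hasDerivAt_of_integrableOn_Ioi (a := x) (fun t _ => hderiv t)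
      hint.integrableOn ((integrable_gaussianPDFReal m v).const_mul _).neg.integrableOn
  rw [integral_Ioi_of_hasDerivAt_of_tendsto' (fun t _ => hderiv t) hint.integrableOn hlim]
  ring

theorem gaussianReal_apply_toReal (m : ℝ) (hv : v ≠ 0) (s : Set ℝ) :
    (gaussianReal m v s).toReal = ∫ t in s, gaussianPDFReal m v t := by
  rw [gaussianReal_apply_eq_integral m hv, ENNReal.toReal_ofReal]
  exact integral_nonneg (gaussianPDFReal_nonneg m v)

theorem gaussianReal_Iio_toReal (m : ℝ) (hv : v ≠ 0) (x : ℝ) :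
    (gaussianReal m v (Iio x)).toReal = ∫ t in Iic x, gaussianPDFReal m v t := by
  rw [gaussianReal_apply_toReal m hv, integral_Iic_eq_integral_Iio]

theorem gaussianReal_Ioi_toReal (m : ℝ) (hv : v ≠ 0) (x : ℝ) :
    (gaussianReal m v (Ioi x)).toReal = 1 - ∫ t in Iic x, gaussianPDFReal m v t := by
  have htotal := integral_add_compl measurableSet_Iic (integrable_gaussianPDFReal m v) (s := Iic x)
  rw [compl_Iic, integral_gaussianPDFReal_eq_one m hv] at htotal
  rw [gaussianReal_apply_toReal m hv]
  linarith

theorem sub_mul_gaussianReal_Ioi_le (m : ℝ) (hv : v ≠ 0) (x : ℝ) :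
    (x - m) * (gaussianReal m v (Ioi x)).toReal ≤ v * gaussianPDFReal m v x := by
  rw [gaussianReal_apply_toReal m hv, ← integral_Ioi_sub_mul_gaussianPDFReal m hv x,
    ← integral_const_mul]
  refine setIntegral_mono_on ((integrable_gaussianPDFReal m v).const_mul _).integrableOn
    (integrable_sub_mul_gaussianPDFReal m hv).integrableOn measurableSet_Ioi fun t ht => ?_
  exact mul_le_mul_of_nonneg_right (by linarith [mem_Ioi.mp ht]) (gaussianPDFReal_nonneg m v t)

theorem sub_mul_gaussianReal_Iio_le (m : ℝ) (hv : v ≠ 0) (x : ℝ) :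
    (m - x) * (gaussianReal m v (Iio x)).toReal ≤ v * gaussianPDFReal m v x := by
  have hreflect : gaussianReal m v (Iio x) = gaussianReal (-m) v (Ioi (-x)) := by
    rw [← gaussianReal_map_neg, Measure.map_apply measurable_neg measurableSet_Ioi]
    congr
    ext t
    simp
  have hpdf : gaussianPDFReal (-m) v (-x) = gaussianPDFReal m v x := by
    simp only [gaussianPDFReal]
    ring_nf
  have hmirror := sub_mul_gaussianReal_Ioi_le (-m) hv (-x)
  rwa [← hreflect, hpdf, neg_sub_neg] at hmirror

theorem hasDerivAt_sub_mul_gaussianReal_Iio_sub_Ioi (m : ℝ) (hv : v ≠ 0) (x : ℝ) :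
    HasDerivAt
      (fun y => (y - m) * ((gaussianReal m v (Iio y)).toReal - (gaussianReal m v (Ioi y)).toReal))
      ((gaussianReal m v (Iio x)).toReal - (gaussianReal m v (Ioi x)).toReal
        + 2 * (x - m) * gaussianPDFReal m v x) x := by
  simp only [gaussianReal_Iio_toReal m hv, gaussianReal_Ioi_toReal m hv]
  have hcdf := hasDerivAt_integral_Iic (integrable_gaussianPDFReal m v)
    (hasDerivAt_gaussianPDFReal m v x).continuousAt
  refine (((hasDerivAt_id x).sub_const m).mul (hcdf.sub (hcdf.const_sub 1))).congr_deriv ?_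
  simp only [Pi.sub_apply, id_eq]
  ring

theorem one_le_abs_gaussianReal_Iio_sub_Ioi_add (m : ℝ) (hv : v ≠ 0) {x : ℝ}
    (hx : (v : ℝ) ≤ (x - m) ^ 2) :
    1 ≤ |(gaussianReal m v (Iio x)).toReal - (gaussianReal m v (Ioi x)).toReal
      + 2 * (x - m) * gaussianPDFReal m v x| := by
  have hv' : (0 : ℝ) < v := by positivity
  have hf := gaussianPDFReal_nonneg m v x
  have hsum : (gaussianReal m v (Iio x)).toReal + (gaussianReal m v (Ioi x)).toReal = 1 := by
    rw [gaussianReal_Iio_toReal m hv, gaussianReal_Ioi_toReal m hv]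
    ring
  have hright := sub_mul_gaussianReal_Ioi_le m hv x
  have hleft := sub_mul_gaussianReal_Iio_le m hv x
  rcases lt_or_gt_of_ne (show x - m ≠ 0 by rintro hxm; nlinarith [hxm]) with hneg | hpos
  · have htail : (gaussianReal m v (Iio x)).toReal ≤ (m - x) * gaussianPDFReal m v x := by
      refine le_of_mul_le_mul_left ?_ (by linarith : 0 < m - x)
      nlinarith
    rw [abs_of_neg (by linarith)]
    linarith
  · have htail : (gaussianReal m v (Ioi x)).toReal ≤ (x - m) * gaussianPDFReal m v x := by
      refine le_of_mul_le_mul_left ?_ hpos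
      nlinarith
    rw [abs_of_pos (by linarith)]
    linarith

end ProbabilityTheory

theorem stmt_4 (X σ : ℝ) (hσ : 0 < σ)
    (μ : Measure ℝ) (hμ : μ = gaussianReal X ⟨σ ^ 2, sq_nonneg σ⟩)
    (h : ℝ → ℝ)
    (hh : ∀ x : ℝ, h x = (x - X) * ((μ {y | y < x}).toReal - (μ {y | x < y}).toReal)) :
    ∀ x : ℝ, |x - X| > Real.sqrt 2 * σ → 1 ≤ |deriv h x| := by
  intro x hx
  have hv : (⟨σ ^ 2, sq_nonneg σ⟩ : ℝ≥0) ≠ 0 :=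
    fun h0 => pow_ne_zero 2 hσ.ne' (congrArg Subtype.val h0)
  have hvx : σ ^ 2 ≤ (x - X) ^ 2 := by
    have hσx : σ < |x - X| := 
      lt_of_le_of_lt (le_mul_of_one_le_left hσ.le Real.one_lt_sqrt_two.le) hx
    rw [← sq_abs (x - X)]
    exact pow_le_pow_left₀ hσ.le hσx.le 2
  have hh' : h = fun y => (y - X) * ((μ (Iio y)).toReal - (μ (Ioi y)).toReal) := funext hh
  rw [hh', hμ, (hasDerivAt_sub_mul_gaussianReal_Iio_sub_Ioi X hv x).deriv]
  exact one_le_abs_gaussianReal_Iio_sub_Ioi_add X hv hvx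
end

section
/- Let T_k = 2^k and λ, μ > 0. Then liminf_{k→∞} Π_{k' ≥ k} (1 − T_{k'}^{-2})^{(λ T_{k'} + μ + 2)(λ T_k + μ + 2)} ≥ e^{−2λ²}. In fact the limit exists and equals e^{−2λ²}. -/
/-!
Since `-x / (1 - x) ≤ log (1 - x) ≤ -x`, a product `∏ (1 - xᵢ) ^ eᵢ` with `0 ≤ xᵢ ≤ δ < 1` and
`eᵢ ≥ 0` lies between `exp (-s / (1 - δ))` and `exp (-s)`, where `s = ∑ xᵢ eᵢ`. For the product
over `k' ≥ k` we have `δ = 4⁻ᵏ → 0`, and `s` splits into two geometric series whose sum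
`(λ + c 2⁻ᵏ) (2λ + 4/3 c 2⁻ᵏ)` (with `c = μ + 2`) tends to `2λ²`.
-/

open Filter Real Set Topology

namespace Real

lemma neg_div_le_log_one_sub_mul {x e δ : ℝ} (hx0 : 0 ≤ x) (hxδ : x ≤ δ) (hδ : δ < 1)
    (he : 0 ≤ e) : -(x * e / (1 - δ)) ≤ log (1 - x) * e := by
  have hpos : 0 < 1 - x := by linarith
  have hlog : -(x / (1 - x)) ≤ log (1 - x) := by
    have := one_sub_inv_le_log_of_pos hpos
    rwa [show 1 - (1 - x)⁻¹ = -(x / (1 - x)) by field_simp; ring] at this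
  have hx : x / (1 - x) ≤ x / (1 - δ) := div_le_div_of_nonneg_left hx0 (by linarith) (by linarith)
  calc -(x * e / (1 - δ)) = -(x / (1 - δ)) * e := by ring
    _ ≤ log (1 - x) * e := mul_le_mul_of_nonneg_right (by linarith) he

lemma log_one_sub_mul_le {x e : ℝ} (hx : x < 1) (he : 0 ≤ e) :
    log (1 - x) * e ≤ -(x * e) := by
  have := log_le_sub_one_of_pos (show 0 < 1 - x by linarith)
  nlinarith

lemma tprod_rpow_eq_exp_tsum {ι : Type*} {b e : ι → ℝ} (hb : ∀ i, 0 < b i)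
    (hs : Summable fun i => log (b i) * e i) :
    ∏' i, b i ^ e i = exp (∑' i, log (b i) * e i) := by
  simp_rw [rpow_def_of_pos (hb _)]
  exact hs.hasSum.rexp.tprod_eq

theorem tprod_one_sub_rpow_mem_Icc {ι : Type*} {x e : ι → ℝ} {δ s : ℝ}
    (hx0 : ∀ i, 0 ≤ x i) (hxδ : ∀ i, x i ≤ δ) (hδ : δ < 1) (he : ∀ i, 0 ≤ e i)
    (hs : HasSum (fun i => x i * e i) s) :
    ∏' i, (1 - x i) ^ e i ∈ Icc (exp (-(s / (1 - δ)))) (exp (-s)) := by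
  have hlow i := neg_div_le_log_one_sub_mul (hx0 i) (hxδ i) hδ (he i)
  have hup i := log_one_sub_mul_le ((hxδ i).trans_lt hδ) (he i)
  have hsum : Summable fun i => log (1 - x i) * e i := by
    rw [← summable_neg_iff]
    refine (hs.summable.div_const (1 - δ)).of_nonneg_of_le (fun i => ?_) (fun i => ?_)
    · nlinarith [hlow i, hup i, mul_nonneg (hx0 i) (he i)]
    · linarith [hlow i]
  rw [tprod_rpow_eq_exp_tsum (fun i => by linarith [(hxδ i).trans_lt hδ]) hsum]
  exact ⟨exp_le_exp.2 (hasSum_le hlow (hs.div_const _).neg hsum.hasSum),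
    exp_le_exp.2 (hasSum_le hup hsum.hasSum hs.neg)⟩

end Real

lemma hasSum_inv_two_pow_sq_mul (lam c : ℝ) (k : ℕ) :
    HasSum (fun j : ℕ => ((2 : ℝ) ^ (k + j))⁻¹ ^ 2 * ((lam * 2 ^ (k + j) + c) * (lam * 2 ^ k + c)))
      ((lam + c * (2 ^ k)⁻¹) * (2 * lam + 4 / 3 * c * (2 ^ k)⁻¹)) := by
  have h2 : HasSum (fun j : ℕ => ((1 : ℝ) / 2) ^ j) 2 := hasSum_geometric_two
  have h4 : HasSum (fun j : ℕ => ((1 : ℝ) / 4) ^ j) (4 / 3) := by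
    convert hasSum_geometric_of_lt_one (r := (1 : ℝ) / 4) (by norm_num) (by norm_num) using 1
    norm_num
  set a := lam + c * (2 ^ k)⁻¹
  have hterm :
      (fun j : ℕ => ((2 : ℝ) ^ (k + j))⁻¹ ^ 2 * ((lam * 2 ^ (k + j) + c) * (lam * 2 ^ k + c))) =
        fun j => lam * a * ((1 : ℝ) / 2) ^ j + c * (2 ^ k)⁻¹ * a * ((1 : ℝ) / 4) ^ j := by
    funext j
    have h4j : (4 : ℝ) ^ j = (2 ^ j) ^ 2 := by rw [← pow_mul, mul_comm, pow_mul]; norm_num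
    simp only [a, one_div, inv_pow, h4j, pow_add]
    field_simp
  rw [hterm, show a * (2 * lam + 4 / 3 * c * (2 ^ k)⁻¹) =
    lam * a * 2 + c * (2 ^ k)⁻¹ * a * (4 / 3) by ring]
  exact (h2.mul_left _).add (h4.mul_left _)

theorem stmt_9 (lam mu : ℝ) (hlam : 0 < lam) (hmu : 0 < mu)
    (P : ℕ → ℝ)
    (hP : ∀ k, P k = ∏' j : ℕ,
      (1 - ((2 : ℝ) ^ (k + j))⁻¹ ^ 2) ^ ((lam * 2 ^ (k + j) + mu + 2) * (lam * 2 ^ k + mu + 2))) :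
    liminf P atTop ≥ Real.exp (-2 * lam ^ 2) ∧
      Tendsto P atTop (nhds (Real.exp (-2 * lam ^ 2))) := by
  set c := mu + 2
  set δ : ℕ → ℝ := fun k => ((2 : ℝ) ^ k)⁻¹ ^ 2
  set s : ℕ → ℝ := fun k => (lam + c * (2 ^ k)⁻¹) * (2 * lam + 4 / 3 * c * (2 ^ k)⁻¹)
  have hinv : Tendsto (fun k : ℕ => ((2 : ℝ) ^ k)⁻¹) atTop (𝓝 0) :=
    tendsto_inv_atTop_zero.comp (tendsto_pow_atTop_atTop_of_one_lt one_lt_two)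
  have hs : Tendsto s atTop (𝓝 (2 * lam ^ 2)) := by
    convert ((hinv.const_mul c).const_add lam).mul
      (((hinv.const_mul (4 / 3 * c)).const_add (2 * lam))) using 2
    ring
  have hδ : Tendsto δ atTop (𝓝 0) := by simpa only [zero_pow two_ne_zero] using hinv.pow 2
  have hbounds : ∀ᶠ k in atTop, P k ∈ Icc (exp (-(s k / (1 - δ k)))) (exp (-s k)) := by
    filter_upwards [eventually_ge_atTop 1] with k hk
    have h2k : (1 : ℝ) < 2 ^ k := one_lt_pow₀ one_lt_two (by omega)
    rw [hP k]
    simp_rw [add_assoc _ mu 2]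
    refine tprod_one_sub_rpow_mem_Icc (fun j => by positivity) (fun j => ?_) ?_
      (fun j => by positivity) (hasSum_inv_two_pow_sq_mul lam c k)
    · simp only [δ]
      gcongr
      · norm_num
      · omega
    · simp only [δ]
      exact pow_lt_one₀ (by positivity) (inv_lt_one_of_one_lt₀ h2k) two_ne_zero
  have hlow : Tendsto (fun k => -(s k / (1 - δ k))) atTop (𝓝 (-(2 * lam ^ 2))) := by
    simpa using (hs.div (hδ.const_sub 1) (by norm_num)).neg
  rw [show -2 * lam ^ 2 = -(2 * lam ^ 2) by ring]
  have hlim : Tendsto P atTop (𝓝 (exp (-(2 * lam ^ 2)))) :=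
    tendsto_of_tendsto_of_tendsto_of_le_of_le' ((continuous_exp.tendsto _).comp hlow)
      ((continuous_exp.tendsto _).comp hs.neg) (hbounds.mono fun k hk => hk.1)
      (hbounds.mono fun k hk => hk.2)
  exact ⟨hlim.liminf_eq.ge, hlim⟩
end
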